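/- For any positive integers n >= 3 and k, d_k(D_{2n}) = nk + 1; and for n >= 2, d_k(Q_{4n}) = 2nk + 1. -/

import Mathlib

open List Subgroup

/-- The set of all products of the terms of `S` in all orders. -/
def PiSet {G : Type*} [Group G] (S : List G) : Set G :=
  {g | ∃ l : List G, l.Perm S ∧ l.prod = g}

/-- `S` is a product-one sequence if `1 ∈ Π(S)`. -/
def IsProdOne {G : Type*} [Group G] (S : List G) : Prop :=
  (1 : G) ∈ PiSet S

/-- The Davenport constant `d(G)`: the smallest `m` such that every sequence of
length `m` over `G` contains a nonempty product-one subsequence. -/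
noncomputable def dC (G : Type*) [Group G] : ℕ :=
  sInf {m | 0 < m ∧ ∀ S : List G, S.length = m →
    ∃ T : List G, T ≠ [] ∧ T.Sublist S ∧ IsProdOne T}

/-- `e(G)`: the smallest `m` such that every nonempty product-one sequence over `G`
contains a nonempty product-one subsequence of length at most `m`. -/
noncomputable def eC (G : Type*) [Group G] : ℕ :=
  sInf {m | 0 < m ∧ ∀ S : List G, S ≠ [] → IsProdOne S →
    ∃ T : List G, T ≠ [] ∧ T.Sublist S ∧ T.length ≤ m ∧ IsProdOne T}

/-- `f(G)`: the smallest `m` such that every sequence of length `d(G)` over `G`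
contains a nonempty product-one subsequence of length at most `m`. -/
noncomputable def fC (G : Type*) [Group G] : ℕ :=
  sInf {m | 0 < m ∧ ∀ S : List G, S.length = dC G →
    ∃ T : List G, T ≠ [] ∧ T.Sublist S ∧ T.length ≤ m ∧ IsProdOne T}

/-- The `k`-th Davenport constant `d_k(G)`: the smallest `m` such that every sequence of
length `m` over `G` contains `k` pairwise disjoint nonempty product-one subsequences. -/
noncomputable def dkC (G : Type*) [Group G] (k : ℕ) : ℕ :=
  sInf {m | 0 < m ∧ ∀ S : List G, S.length = m →
    ∃ Ts : List (List G), Ts.length = k ∧ (∀ T ∈ Ts, T ≠ [] ∧ IsProdOne T) ∧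
      (Ts.flatten : Multiset G) ≤ (S : Multiset G)}

/-!
If every term of a sequence lies in `⟨x⟩` except for a single `y ∉ ⟨x⟩`, no ordering of it has
product one. So every product-one subsequence of `x ^ (N k - 1) y`, where `N = ord x`, is a power
of `x` of length at least `N`, and `k` disjoint ones do not fit: `d_k ≥ N k + 1`. Conversely, if
every `N + 1` terms contain a product-one subsequence of length at most `N`, peeling such
subsequences off `N k + 1` terms leaves `k` disjoint ones.

For `D_{2n}`, `n ≥ 3`, the short subsequence comes from pigeonholing the prefix sums of the
rotations against the differences of the reflections. For `Q_{4n}`, `n ≥ 3`, the projection onto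
`D_{2n}` has kernel `{1, a^n}`: a short subsequence of the first `n + 1` terms has product `1` or
`a^n`, and in the latter case a second one among the remaining `n + 1` terms completes it. In
`Q_8` the same works because any three elements contain a product-one subsequence or one of
length at most two with product `a^2 = -1`.
-/
theorem List.Subperm.exists_perm_append {α : Type*} {l₁ l₂ : List α} (h : l₁ <+~ l₂) :
    ∃ l, l₂ ~ l₁ ++ l := by
  obtain ⟨u, hu, hsub⟩ := h
  obtain ⟨l, hl⟩ := hsub.exists_perm_append
  exact ⟨l, hl.trans (hu.append_right l)⟩

theorem List.Subperm.exists_eq_map {α β : Type*} {f : α → β} {l' : List β} {l : List α}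
    (h : l' <+~ l.map f) : ∃ u, u <+~ l ∧ u.map f = l' := by
  obtain ⟨v', hv', hsub⟩ := h
  obtain ⟨v, hv, rfl⟩ := sublist_map_iff.1 hsub
  obtain ⟨u, rfl, hu⟩ : Relation.Comp (· = List.map f ·) (· ~ ·) l' v := by
    rw [eq_map_comp_perm]
    exact hv'.symm
  exact ⟨u, ⟨v, hu.symm, hv⟩, rfl⟩

theorem List.exists_sublist_sum_eq_take_sum_sub {A : Type*} [AddCommGroup A] (R : List A)
    {i j : ℕ} (hij : i < j) (hj : j ≤ R.length) :
    ∃ C, C <+ R ∧ C ≠ [] ∧ C.length ≤ j ∧ C.sum = (R.take j).sum - (R.take i).sum := by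
  refine ⟨(R.take j).drop i, (drop_sublist _ _).trans (take_sublist _ _),
    ne_nil_of_length_pos (by rw [length_drop, length_take]; omega), by simp, ?_⟩
  have := congrArg sum (take_append_drop i (R.take j))
  rw [sum_append, take_take, min_eq_left hij.le] at this
  rw [← this, add_sub_cancel_left]

theorem List.exists_sublist_sum_eq_zero_of_take_sum_eq {A : Type*} [AddCommGroup A]
    {R : List A} {i j : ℕ} (hij : i ≠ j) (hi : i ≤ R.length) (hj : j ≤ R.length)
    (h : (R.take i).sum = (R.take j).sum) :
    ∃ C, C <+ R ∧ C ≠ [] ∧ C.length ≤ max i j ∧ C.sum = 0 := by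
  rcases hij.lt_or_gt with hlt | hlt
  · obtain ⟨C, hC, hne, hlen, hsum⟩ := R.exists_sublist_sum_eq_take_sum_sub hlt hj
    exact ⟨C, hC, hne, by omega, by rw [hsum, h, sub_self]⟩
  · obtain ⟨C, hC, hne, hlen, hsum⟩ := R.exists_sublist_sum_eq_take_sum_sub hlt hi
    exact ⟨C, hC, hne, by omega, by rw [hsum, h, sub_self]⟩

theorem List.exists_sublist_sum_eq_zero {A : Type*} [AddCommGroup A] [Fintype A] (R : List A)
    (hR : Fintype.card A ≤ R.length) :
    ∃ C, C <+ R ∧ C ≠ [] ∧ C.length ≤ Fintype.card A ∧ C.sum = 0 := by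
  obtain ⟨i, j, hne, h⟩ := Fintype.exists_ne_map_eq_of_card_lt
    (fun t : Fin (Fintype.card A + 1) => (R.take t).sum) (by simp)
  obtain ⟨C, hC, hCne, hlen, hsum⟩ :=
    exists_sublist_sum_eq_zero_of_take_sum_eq (Fin.val_injective.ne hne) (by omega) (by omega) h
  exact ⟨C, hC, hCne, by omega, hsum⟩

section

variable {G : Type*} [Group G]

/-- `T` is listed in an order realising the product `g`. -/
def HasShortProdEq (g : G) (N : ℕ) (S : List G) : Prop :=
  ∃ T, T <+~ S ∧ T ≠ [] ∧ T.length ≤ N ∧ T.prod = g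

def HasDisjointProdOnes (k : ℕ) (S : List G) : Prop :=
  ∃ Ts : List (List G), Ts.length = k ∧ (∀ T ∈ Ts, T ≠ [] ∧ IsProdOne T) ∧
    (Ts.flatten : Multiset G) ≤ (S : Multiset G)

theorem HasShortProdEq.of_subperm {g : G} {N : ℕ} {S S' : List G} (hS : S <+~ S')
    (h : HasShortProdEq g N S) : HasShortProdEq g N S' :=
  let ⟨T, hT, hne, hlen, hprod⟩ := h
  ⟨T, hT.trans hS, hne, hlen, hprod⟩

theorem HasShortProdEq.mono {g : G} {N N' : ℕ} {S : List G} (hN : N ≤ N')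
    (h : HasShortProdEq g N S) : HasShortProdEq g N' S :=
  let ⟨T, hT, hne, hlen, hprod⟩ := h
  ⟨T, hT, hne, hlen.trans hN, hprod⟩

theorem hasDisjointProdOnes_of_hasShortProdEq {N : ℕ}
    (hf : ∀ S : List G, S.length = N + 1 → HasShortProdEq 1 N S) (k : ℕ) (S : List G)
    (hS : N * k + 1 ≤ S.length) : HasDisjointProdOnes k S := by
  induction k generalizing S with
  | zero => exact ⟨[], rfl, by simp, by simp⟩
  | succ k ih =>
    rw [Nat.mul_succ] at hS
    obtain ⟨T, hTS, hne, hlen, hprod⟩ := hf (S.take (N + 1)) (by rw [length_take]; omega)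
    obtain ⟨rest, hperm⟩ := (hTS.trans (take_sublist _ _).subperm).exists_perm_append
    have hrest : N * k + 1 ≤ rest.length := by
      have := hperm.length_eq
      simp only [length_append] at this
      omega
    obtain ⟨Ts, hlenTs, hTs, hle⟩ := ih rest hrest
    refine ⟨T :: Ts, by simp [hlenTs], ?_, ?_⟩
    · simp only [mem_cons, forall_eq_or_imp]
      exact ⟨⟨hne, T, Perm.refl T, hprod⟩, hTs⟩
    · rw [flatten_cons, ← Multiset.coe_add, Multiset.coe_eq_coe.2 hperm, ← Multiset.coe_add]
      exact (add_le_add_iff_left _).2 hle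

theorem List.prod_notMem_of_count_eq_one [DecidableEq G] {H : Subgroup G} {y : G} (hy : y ∉ H)
    {l : List G} (hl : ∀ g ∈ l, g ≠ y → g ∈ H) (hcount : l.count y = 1) :
    l.prod ∉ H := by
  obtain ⟨l₁, l₂, rfl⟩ := append_of_mem (count_pos_iff.1 (hcount ▸ Nat.one_pos))
  simp only [count_append, count_cons_self] at hcount
  have mem : ∀ l' : List G, l' ⊆ l₁ ++ y :: l₂ → l'.count y = 0 → l'.prod ∈ H :=
    fun l' hsub h0 => H.list_prod_mem fun g hg =>
      hl g (hsub hg) fun hgy => (count_eq_zero.1 h0) (hgy ▸ hg)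
  rw [prod_append, prod_cons, ← mul_assoc,
    H.mul_mem_cancel_right (mem l₂ (fun g hg => by simp [hg]) (by omega)),
    H.mul_mem_cancel_left (mem l₁ (fun g hg => by simp [hg]) (by omega))]
  exact hy

theorem forall_eq_of_isProdOne_of_le_replicate_append {x y : G} (hy : y ∉ zpowers x) {j : ℕ}
    {T : List G} (hT : (T : Multiset G) ≤ ↑(replicate j x ++ [y])) (hprod : IsProdOne T) :
    ∀ g ∈ T, g = x := by
  classical
  have hxy : x ≠ y := fun h => hy (h ▸ mem_zpowers x)
  have hmem : ∀ g ∈ T, g = x ∨ g = y := fun g hg =>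
    (mem_append.1 (Multiset.mem_of_le hT hg)).imp eq_of_mem_replicate mem_singleton.1
  have hcount : T.count y ≤ 1 := by
    simpa [count_replicate, hxy] using Multiset.count_le_of_le y hT
  obtain ⟨l, hl, hl1⟩ := hprod
  have hcount' : T.count y ≠ 1 := fun h1 =>
    List.prod_notMem_of_count_eq_one hy
      (fun g hg hgy => ((hmem g (hl.mem_iff.1 hg)).resolve_right hgy) ▸ mem_zpowers x)
      ((hl.count_eq y).trans h1) (hl1 ▸ one_mem _)
  intro g hg
  refine (hmem g hg).resolve_right ?_
  rintro rfl
  have := count_pos_iff.2 hg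
  omega

theorem orderOf_le_length_of_isProdOne {x : G} {T : List G} (hne : T ≠ [])
    (hx : ∀ g ∈ T, g = x) (h : IsProdOne T) : orderOf x ≤ T.length := by
  obtain ⟨l, hl, hprod⟩ := h
  rw [eq_replicate_length.2 fun g hg => hx g (hl.mem_iff.1 hg), prod_replicate] at hprod
  rw [← hl.length_eq]
  exact orderOf_le_of_pow_eq_one (hl.length_eq ▸ length_pos_iff.2 hne) hprod

theorem not_hasDisjointProdOnes_replicate_append {x y : G} (hy : y ∉ zpowers x) {j k : ℕ}
    (hj : j < orderOf x * k) : ¬ HasDisjointProdOnes k (replicate j x ++ [y]) := by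
  classical
  rintro ⟨Ts, hlen, hTs, hle⟩
  have hxy : x ≠ y := fun h => hy (h ▸ mem_zpowers x)
  have hle' : ∀ T ∈ Ts, (T : Multiset G) ≤ ↑(replicate j x ++ [y]) := fun T hT =>
    (Multiset.coe_le.2 (sublist_flatten_of_mem hT).subperm).trans hle
  have hx : ∀ T ∈ Ts, ∀ g ∈ T, g = x := fun T hT =>
    forall_eq_of_isProdOne_of_le_replicate_append hy (hle' T hT) (hTs T hT).2
  have hlong : orderOf x * k ≤ Ts.flatten.length := by
    rw [length_flatten, ← hlen, mul_comm]
    simpa using card_nsmul_le_sum (Ts.map length) (orderOf x) (by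
      simpa using fun T hT => orderOf_le_length_of_isProdOne (hTs T hT).1 (hx T hT) (hTs T hT).2)
  have hshort : Ts.flatten.length ≤ j := by
    have := Multiset.count_le_of_le x hle
    rw [Multiset.coe_count, Multiset.coe_count, count_eq_length.2 fun g hg => ?_] at this
    · simpa [count_replicate, Ne.symm hxy] using this
    obtain ⟨T, hT, hgT⟩ := mem_flatten.1 hg
    exact (hx T hT g hgT).symm
  omega

theorem dkC_eq_of_hasShortProdEq {x y : G} {N : ℕ} (hx : orderOf x = N) (hy : y ∉ zpowers x)
    (hf : ∀ S : List G, S.length = N + 1 → HasShortProdEq 1 N S) (k : ℕ) :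
    dkC G k = N * k + 1 := by
  have hmem :
      N * k + 1 ∈ {m | 0 < m ∧ ∀ S : List G, S.length = m → HasDisjointProdOnes k S} :=
    ⟨Nat.succ_pos _, fun S hS => hasDisjointProdOnes_of_hasShortProdEq hf k S hS.ge⟩
  refine le_antisymm (Nat.sInf_le hmem) (le_csInf ⟨_, hmem⟩ fun m ⟨hm, hdisj⟩ => ?_)
  by_contra! hlt
  exact not_hasDisjointProdOnes_replicate_append hy (by rw [hx]; omega)
    (hdisj (replicate (m - 1) x ++ [y])
      (by rw [length_append, length_replicate, length_singleton]; omega))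

theorem hasShortProdEq_one_of_mul_self_eq_one {z : G} (hz : z * z = 1) {N M : ℕ}
    (h : ∀ S : List G, S.length = M → HasShortProdEq 1 (2 * N) S ∨ HasShortProdEq z N S)
    (S : List G) (hS : S.length = N + M) : HasShortProdEq 1 (2 * N) S := by
  have window : ∀ S' : List G, M ≤ S'.length →
      HasShortProdEq 1 (2 * N) S' ∨ HasShortProdEq z N S' := fun S' hS' =>
    (h (S'.take M) (by simpa using hS')).imp (.of_subperm (take_sublist _ _).subperm)
      (.of_subperm (take_sublist _ _).subperm)
  obtain h1 | ⟨T₁, hT₁, hne₁, hlen₁, hprod₁⟩ := window S (by omega)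
  · exact h1
  obtain ⟨rest, hperm⟩ := hT₁.exists_perm_append
  have hrest : M ≤ rest.length := by
    have := hperm.length_eq
    simp only [length_append] at this
    omega
  obtain h2 | ⟨T₂, hT₂, -, hlen₂, hprod₂⟩ := window rest hrest
  · exact h2.of_subperm ((sublist_append_right T₁ rest).subperm.trans hperm.symm.subperm)
  refine ⟨T₁ ++ T₂, ((Subperm.refl T₁).append hT₂).trans hperm.symm.subperm,
    by simp [hne₁], by simp only [length_append]; omega,
    by rw [prod_append, hprod₁, hprod₂, hz]⟩

theorem HasShortProdEq.of_map {H : Type*} [Group H] (φ : G →* H) {z : G}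
    (hker : ∀ g, φ g = 1 → g = 1 ∨ g = z) {N : ℕ} {S : List G}
    (h : HasShortProdEq 1 N (S.map φ)) : HasShortProdEq 1 N S ∨ HasShortProdEq z N S := by
  obtain ⟨T', hT', hne, hlen, hprod⟩ := h
  obtain ⟨T, hT, rfl⟩ := hT'.exists_eq_map
  rw [← map_list_prod] at hprod
  simp only [ne_eq, map_eq_nil_iff, length_map] at hne hlen
  exact (hker _ hprod).imp (fun h1 => ⟨T, hT, hne, hlen, h1⟩)
    fun hz => ⟨T, hT, hne, hlen, hz⟩

end

namespace DihedralGroup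

variable {n N : ℕ}

theorem exists_perm_map_r_append_map_sr :
    ∀ S : List (DihedralGroup n), ∃ R F : List (ZMod n), S ~ R.map r ++ F.map sr
  | [] => ⟨[], [], Perm.refl _⟩
  | r i :: S =>
    let ⟨R, F, h⟩ := exists_perm_map_r_append_map_sr S
    ⟨i :: R, F, h.cons _⟩
  | sr i :: S =>
    let ⟨R, F, h⟩ := exists_perm_map_r_append_map_sr S
    ⟨R, i :: F, (h.cons _).trans perm_middle.symm⟩

theorem prod_map_r (C : List (ZMod n)) : (C.map r).prod = r C.sum := by
  induction C with
  | nil => rfl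
  | cons i C ih => rw [map_cons, prod_cons, ih, r_mul_r, sum_cons]

variable {R F : List (ZMod n)}

theorem hasShortProdEq_of_sum_eq_zero {C : List (ZMod n)} (hC : C <+ R) (hne : C ≠ [])
    (hlen : C.length ≤ N) (hsum : C.sum = 0) : HasShortProdEq 1 N (R.map r ++ F.map sr) :=
  ⟨C.map r, ((hC.map r).trans (sublist_append_left _ _)).subperm, by simpa using hne,
    by simpa using hlen, by rw [prod_map_r, hsum, r_zero]⟩

theorem hasShortProdEq_of_sum_eq_sub {C : List (ZMod n)} {a b : ZMod n} (hC : C <+ R)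
    (hab : [a, b] <+~ F) (hlen : C.length + 2 ≤ N) (hsum : C.sum = b - a) :
    HasShortProdEq 1 N (R.map r ++ F.map sr) := by
  refine ⟨sr a :: (C.map r ++ [sr b]), perm_middle.symm.subperm.trans
    ((hC.map r).subperm.append (hab.map fun _ _ => sr.inj)), by simp,
    by simp only [length_cons, length_append, length_map]; omega, ?_⟩
  rw [prod_cons, prod_append, prod_map_r, prod_singleton, r_mul_sr, sr_mul_sr, hsum,
    sub_sub_cancel, sub_self, r_zero]

theorem hasShortProdEq_of_two_reflections (hn : 3 ≤ n) {a b : ZMod n} (hR : R.length = n - 1) :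
    HasShortProdEq 1 n (R.map r ++ [a, b].map sr) := by
  have : NeZero n := ⟨by omega⟩
  obtain rfl | hab := eq_or_ne a b
  · exact hasShortProdEq_of_sum_eq_sub (nil_sublist R) (Subperm.refl _)
      (by rw [length_nil]; omega) (by simp)
  -- Prefixes of length `n - 1` are excluded: with both reflections they would give `n + 1` terms.
  let P : Fin (n - 1) → ZMod n := fun t => (R.take t).sum
  have zero (i j : Fin (n - 1)) (hij : i ≠ j) (h : P i = P j) :
      HasShortProdEq 1 n (R.map r ++ [a, b].map sr) := by
    obtain ⟨C, hC, hne, hlen, hsum⟩ :=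
      exists_sublist_sum_eq_zero_of_take_sum_eq (Fin.val_injective.ne hij) (by omega) (by omega) h
    exact hasShortProdEq_of_sum_eq_zero hC hne (by omega) hsum
  have cross (i j : Fin (n - 1)) (h : P i = P j + (b - a)) :
      HasShortProdEq 1 n (R.map r ++ [a, b].map sr) := by
    have hij : (i : ℕ) ≠ j := fun hij => hab (by
      rw [Fin.ext hij, left_eq_add, sub_eq_zero] at h
      exact h.symm)
    rcases hij.lt_or_gt with hlt | hlt
    · obtain ⟨C, hC, -, hlen, hsum⟩ := R.exists_sublist_sum_eq_take_sum_sub hlt (by omega)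
      exact hasShortProdEq_of_sum_eq_sub hC (Perm.swap a b []).subperm (by omega)
        (by rw [hsum, show (R.take i).sum = P i from rfl, h]; abel)
    · obtain ⟨C, hC, -, hlen, hsum⟩ := R.exists_sublist_sum_eq_take_sum_sub hlt (by omega)
      exact hasShortProdEq_of_sum_eq_sub hC (Subperm.refl _) (by omega)
        (by rw [hsum, show (R.take i).sum = P i from rfl, h]; abel)
  obtain ⟨s, s', hss', h⟩ := Fintype.exists_ne_map_eq_of_card_lt
    (Sum.elim P fun t => P t + (b - a)) (by simp [ZMod.card]; omega)
  rcases s with i | i <;> rcases s' with j | j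
  · exact zero i j (by simpa using hss') h
  · exact cross i j h
  · exact cross j i h.symm
  · exact zero i j (by simpa using hss') (add_right_cancel h)

theorem hasShortProdEq_of_three_le_reflections (hF : 3 ≤ F.length)
    (hRF : R.length + F.length = n + 1) : HasShortProdEq 1 n (R.map r ++ F.map sr) := by
  have : NeZero n := ⟨by omega⟩
  obtain ⟨F, b, rfl⟩ := (eq_nil_or_concat F).resolve_left (by rintro rfl; simp at hF)
  simp only [concat_eq_append, length_append, length_singleton] at hF hRF ⊢
  by_cases hnd : F.Nodup
  swap
  · obtain ⟨a, ha⟩ : ∃ a, [a, a] <+ F := by simpa [nodup_iff_sublist] using hnd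
    exact hasShortProdEq_of_sum_eq_sub (nil_sublist R)
      (ha.trans (sublist_append_left _ _)).subperm (by rw [length_nil]; omega) (by simp)
  let P : Fin (R.length + 1) → ZMod n := fun t => (R.take t).sum
  have cross (i : Fin F.length) (t : Fin (R.length + 1)) (h : b - F[i] = P t) :
      HasShortProdEq 1 n (R.map r ++ (F ++ [b]).map sr) :=
    hasShortProdEq_of_sum_eq_sub (take_sublist t R)
      ((singleton_sublist.2 (getElem_mem _)).append (Sublist.refl [b])).subperm
      (by rw [length_take]; omega) h.symm
  obtain ⟨s, s', hss', h⟩ := Fintype.exists_ne_map_eq_of_card_lt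
    (Sum.elim (fun i : Fin F.length => b - F[i]) P) (by simp [ZMod.card]; omega)
  rcases s with i | t <;> rcases s' with j | t'
  · exact absurd (Fin.ext (hnd.getElem_inj_iff.1 (sub_right_injective h))) (by simpa using hss')
  · exact cross i t' h
  · exact cross j t h.symm
  · obtain ⟨C, hC, hne, hlen, hsum⟩ := exists_sublist_sum_eq_zero_of_take_sum_eq
      (Fin.val_injective.ne (by simpa using hss')) (by omega) (by omega) h
    exact hasShortProdEq_of_sum_eq_zero hC hne (by omega) hsum

theorem hasShortProdEq_one (hn : 3 ≤ n) (S : List (DihedralGroup n)) (hS : S.length = n + 1) :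
    HasShortProdEq 1 n S := by
  have : NeZero n := ⟨by omega⟩
  obtain ⟨R, F, hperm⟩ := exists_perm_map_r_append_map_sr S
  have hRF : R.length + F.length = n + 1 := by simpa [hS] using hperm.length_eq.symm
  refine .of_subperm hperm.symm.subperm ?_
  rcases Nat.lt_or_ge F.length 2 with hF | hF
  · obtain ⟨C, hC, hne, hlen, hsum⟩ := R.exists_sublist_sum_eq_zero (by rw [ZMod.card]; omega)
    exact hasShortProdEq_of_sum_eq_zero hC hne (by rwa [ZMod.card] at hlen) hsum
  obtain hF | hF := hF.eq_or_lt
  · obtain ⟨a, b, rfl⟩ := length_eq_two.1 hF.symm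
    exact hasShortProdEq_of_two_reflections hn
      (by simp only [length_cons, length_nil] at hRF; omega)
  · exact hasShortProdEq_of_three_le_reflections hF hRF

theorem sr_zero_notMem_zpowers_r_one : sr 0 ∉ zpowers (r 1 : DihedralGroup n) := by
  rintro ⟨k, hk⟩
  simp at hk

end DihedralGroup

namespace QuaternionGroup

variable {n : ℕ}

def toDihedralGroup (n : ℕ) : QuaternionGroup n →* DihedralGroup n where
  toFun
    | a i => .r (ZMod.castHom (dvd_mul_left n 2) (ZMod n) i)
    | xa i => .sr (ZMod.castHom (dvd_mul_left n 2) (ZMod n) i)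
  map_one' := by
    show DihedralGroup.r _ = _
    rw [map_zero]
    rfl
  map_mul' := by
    rintro (i | i) (j | j) <;>
      simp [a_mul_a, a_mul_xa, xa_mul_a, xa_mul_xa, DihedralGroup.r_mul_r,
        DihedralGroup.r_mul_sr, DihedralGroup.sr_mul_r, DihedralGroup.sr_mul_sr]

theorem eq_one_or_eq_a_of_toDihedralGroup_eq_one [NeZero n] {g : QuaternionGroup n}
    (h : toDihedralGroup n g = 1) : g = 1 ∨ g = a n := by
  cases g with
  | xa i => cases h
  | a i =>
    have hi : ((i.val : ℕ) : ZMod n) = 0 := by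
      change DihedralGroup.r _ = DihedralGroup.r 0 at h
      rw [← DihedralGroup.r.inj h, ZMod.castHom_apply, ZMod.cast_eq_val]
    obtain ⟨c, hc⟩ := (ZMod.natCast_eq_zero_iff _ _).1 hi
    have hc2 : c < 2 := by
      have := i.val_lt
      nlinarith
    rw [← ZMod.natCast_zmod_val i, hc, one_def]
    interval_cases c <;> simp

theorem a_natCast_mul_self : (a n : QuaternionGroup n) * a n = 1 := by
  rw [a_mul_a, ← Nat.cast_add, ← two_mul, ZMod.natCast_self, a_zero]

theorem xa_zero_notMem_zpowers_a_one [NeZero n] : xa 0 ∉ zpowers (a 1 : QuaternionGroup n) := by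
  rw [← mem_powers_iff_mem_zpowers]
  rintro ⟨k, hk⟩
  simp [a_one_pow] at hk

theorem hasShortProdEq_or_of_length_eq_three (S : List (QuaternionGroup 2)) (hS : S.length = 3) :
    HasShortProdEq 1 4 S ∨ HasShortProdEq (a 2) 2 S := by
  obtain ⟨u, v, w, rfl⟩ := length_eq_three.1 hS
  have hcand : ∀ T ∈ [[u], [v], [w], [u, v], [u, w], [v, w], [u, v, w], [u, w, v]],
      T <+~ [u, v, w] ∧ T ≠ [] := by
    simp only [mem_cons, not_mem_nil, or_false, forall_eq_or_imp, forall_eq]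
    refine ⟨?_, ?_, ?_, ?_, ?_, ?_, ?_, ?_⟩ <;> refine ⟨?_, by simp⟩
    all_goals first
      | exact ((Perm.swap v w []).cons u).subperm
      | exact Sublist.subperm (by simp)
  have key : ∀ u v w : QuaternionGroup 2,
      ∃ T ∈ [[u], [v], [w], [u, v], [u, w], [v, w], [u, v, w], [u, w, v]],
        T.prod = 1 ∨ (T.length ≤ 2 ∧ T.prod = a 2) := by decide
  obtain ⟨T, hT, hprod⟩ := key u v w
  obtain ⟨hsub, hne⟩ := hcand T hT
  rcases hprod with h1 | ⟨hlen, h2⟩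
  · exact .inl ⟨T, hsub, hne, hsub.length_le.trans (by simp), h1⟩
  · exact .inr ⟨T, hsub, hne, hlen, h2⟩

theorem hasShortProdEq_one (hn : 2 ≤ n) (S : List (QuaternionGroup n))
    (hS : S.length = 2 * n + 1) : HasShortProdEq 1 (2 * n) S := by
  have : NeZero n := ⟨by omega⟩
  obtain rfl | hn := hn.eq_or_lt
  · exact hasShortProdEq_one_of_mul_self_eq_one a_natCast_mul_self
      hasShortProdEq_or_of_length_eq_three S hS
  · refine hasShortProdEq_one_of_mul_self_eq_one a_natCast_mul_self (fun S hS => ?_) S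
      (by omega : S.length = n + (n + 1))
    exact ((DihedralGroup.hasShortProdEq_one hn _ (by simpa using hS)).of_map _
      fun _ => eq_one_or_eq_a_of_toDihedralGroup_eq_one).imp_left (.mono (by omega))

end QuaternionGroup

/-- `d_k(D_{2n}) = nk + 1` for `n ≥ 3`, and `d_k(Q_{4n}) = 2nk + 1` for `n ≥ 2`. -/
theorem dk_dihedral_dicyclic :
    (∀ n k : ℕ, 3 ≤ n → 0 < k → dkC (DihedralGroup n) k = n * k + 1) ∧
    (∀ n k : ℕ, 2 ≤ n → 0 < k → dkC (QuaternionGroup n) k = 2 * n * k + 1) := by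
  refine ⟨fun n k hn _ => ?_, fun n k hn _ => ?_⟩
  · exact dkC_eq_of_hasShortProdEq DihedralGroup.orderOf_r_one
      DihedralGroup.sr_zero_notMem_zpowers_r_one (DihedralGroup.hasShortProdEq_one hn) k
  · have : NeZero n := ⟨by omega⟩
    exact dkC_eq_of_hasShortProdEq QuaternionGroup.orderOf_a_one
      QuaternionGroup.xa_zero_notMem_zpowers_a_one (QuaternionGroup.hasShortProdEq_one hn) k
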